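/- Let λ_1,…,λ_p and δ_1,…,δ_p be real numbers with empirical distributions μ = p^{-1}∑δ_{λ_i} and ν = p^{-1}∑δ_{δ_i}. Then for any α > 0, d_L(μ,ν)^{α+1} ≤ min_π (1/p)∑_{k=1}^p |λ_k − δ_{π(k)}|^α, where the minimum is over permutations π of {1,…,p}. -/

import Mathlib

open MeasureTheory Finset

/-- Lévy distance between two measures on ℝ. -/
noncomputable def levyDist (μ ν : Measure ℝ) : ℝ :=
  sInf {ε : ℝ | 0 < ε ∧ ∀ x : ℝ,
    (μ (Set.Iic (x - ε))).toReal - ε ≤ (ν (Set.Iic x)).toReal ∧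
    (ν (Set.Iic x)).toReal ≤ (μ (Set.Iic (x + ε))).toReal + ε}

/-- Empirical distribution of a finite family of real numbers. -/
noncomputable def empDist {p : ℕ} (lam : Fin p → ℝ) : Measure ℝ :=
  ((p : ENNReal))⁻¹ • ∑ i : Fin p, Measure.dirac (lam i)

/-! Reindexing `δ` by `π` does not change its empirical distribution, so it suffices to compare
`empDist λ` with `empDist (δ ∘ π)` index by index. Markov's inequality bounds the fraction of
indices with `ε < |λ k - δ (π k)|` by `ε⁻ᵅ · (1/p) ∑ |λ k - δ (π k)|^α`, which is at most `ε` as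
soon as `ε^(α+1)` dominates the mean; every other index moves by at most `ε`, so the two
distribution functions are `ε`-close in the Lévy sense. -/

lemma levyDist_le_of_forall_lt {μ ν : Measure ℝ} {ε₀ : ℝ} (hε₀ : 0 ≤ ε₀)
    (h : ∀ ε, ε₀ < ε → ∀ x : ℝ,
      (μ (Set.Iic (x - ε))).toReal - ε ≤ (ν (Set.Iic x)).toReal ∧
      (ν (Set.Iic x)).toReal ≤ (μ (Set.Iic (x + ε))).toReal + ε) :
    levyDist μ ν ≤ ε₀ :=
  le_of_forall_gt_imp_ge_of_dense fun ε hε =>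
    csInf_le ⟨0, fun _ hy => hy.1.le⟩ ⟨hε₀.trans_lt hε, h ε hε⟩

lemma levyDist_nonneg (μ ν : Measure ℝ) : 0 ≤ levyDist μ ν :=
  Real.sInf_nonneg fun _ hy => hy.1.le

section Empirical

variable {p : ℕ}

lemma empDist_comp_perm (f : Fin p → ℝ) (π : Equiv.Perm (Fin p)) :
    empDist (f ∘ π) = empDist f := by
  simp only [empDist, Function.comp_apply, Equiv.sum_comp π (fun i => Measure.dirac (f i))]

lemma empDist_Iic_toReal (f : Fin p → ℝ) (x : ℝ) :
    (empDist f (Set.Iic x)).toReal = (#{i | f i ≤ x} : ℝ) / p := by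
  simp only [empDist, Measure.smul_apply, Measure.finsetSum_apply,
    Measure.dirac_apply' _ measurableSet_Iic, Set.indicator_apply, Set.mem_Iic,
    Pi.one_apply, sum_boole, smul_eq_mul, ENNReal.toReal_mul, ENNReal.toReal_inv,
    ENNReal.toReal_natCast]
  rw [div_eq_inv_mul]

lemma card_filter_le_card_filter_add_card_filter (f g : Fin p → ℝ) (ε x : ℝ) :
    #{i | f i ≤ x} ≤ #{i | g i ≤ x + ε} + #{i | ε < |f i - g i|} := by
  refine (card_le_card fun i => ?_).trans (card_union_le _ _)
  simp only [mem_filter, mem_univ, true_and, mem_union]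
  intro hi
  by_cases hfar : ε < |f i - g i|
  · exact Or.inr hfar
  · exact Or.inl (by linarith [(abs_le.mp (not_lt.mp hfar)).1])

lemma card_filter_lt_abs_mul_rpow_le_sum (f g : Fin p → ℝ) {α ε : ℝ} (hα : 0 ≤ α)
    (hε : 0 ≤ ε) :
    (#{i | ε < |f i - g i|} : ℝ) * ε ^ α ≤ ∑ k, |f k - g k| ^ α := by
  calc (#{i | ε < |f i - g i|} : ℝ) * ε ^ α
      ≤ ∑ k ∈ {i | ε < |f i - g i|}, |f k - g k| ^ α := by
        rw [← nsmul_eq_mul]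
        exact card_nsmul_le_sum _ _ _ fun k hk =>
          Real.rpow_le_rpow hε (mem_filter.mp hk).2.le hα
    _ ≤ ∑ k, |f k - g k| ^ α :=
        sum_le_sum_of_subset_of_nonneg (subset_univ _) fun k _ _ => by positivity

lemma empDist_Iic_le_add {f g : Fin p → ℝ} {α ε : ℝ} (hα : 0 ≤ α) (hε : 0 < ε)
    (hmean : (1 / (p : ℝ)) * ∑ k, |f k - g k| ^ α ≤ ε ^ (α + 1)) (x : ℝ) :
    (empDist f (Set.Iic x)).toReal ≤ (empDist g (Set.Iic (x + ε))).toReal + ε := by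
  have hfar : (#{i | ε < |f i - g i|} : ℝ) / p ≤ ε := by
    refine le_of_mul_le_mul_right ?_ (Real.rpow_pos_of_pos hε α)
    calc (#{i | ε < |f i - g i|} : ℝ) / p * ε ^ α
        = 1 / p * ((#{i | ε < |f i - g i|} : ℝ) * ε ^ α) := by ring
      _ ≤ 1 / p * ∑ k, |f k - g k| ^ α := by
        gcongr
        exact card_filter_lt_abs_mul_rpow_le_sum f g hα hε.le
      _ ≤ ε ^ (α + 1) := hmean
      _ = ε * ε ^ α := by rw [Real.rpow_add hε, Real.rpow_one, mul_comm]
  rw [empDist_Iic_toReal, empDist_Iic_toReal]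
  calc (#{i | f i ≤ x} : ℝ) / p
      ≤ ((#{i | g i ≤ x + ε} : ℝ) + #{i | ε < |f i - g i|}) / p := by
        gcongr
        exact_mod_cast card_filter_le_card_filter_add_card_filter f g ε x
    _ ≤ (#{i | g i ≤ x + ε} : ℝ) / p + ε := by rw [add_div]; gcongr

theorem levyDist_empDist_rpow_le (f g : Fin p → ℝ) {α : ℝ} (hα : 0 < α) :
    levyDist (empDist f) (empDist g) ^ (α + 1) ≤ (1 / (p : ℝ)) * ∑ k, |f k - g k| ^ α := by
  set S := (1 / (p : ℝ)) * ∑ k, |f k - g k| ^ α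
  have hS : 0 ≤ S := by positivity
  have hα1 : 0 < α + 1 := by linarith
  have hε₀ : (S ^ (α + 1)⁻¹) ^ (α + 1) = S := Real.rpow_inv_rpow hS hα1.ne'
  have hlevy : levyDist (empDist f) (empDist g) ≤ S ^ (α + 1)⁻¹ := by
    refine levyDist_le_of_forall_lt (by positivity) fun ε hε x => ?_
    have hεpos : 0 < ε := lt_of_le_of_lt (by positivity) hε
    have hmean : S ≤ ε ^ (α + 1) :=
      hε₀ ▸ Real.rpow_le_rpow (by positivity) hε.le hα1.le
    have hmean' : (1 / (p : ℝ)) * ∑ k, |g k - f k| ^ α ≤ ε ^ (α + 1) := by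
      simpa only [abs_sub_comm] using hmean
    constructor
    · have h := empDist_Iic_le_add hα.le hεpos hmean (x - ε)
      rw [sub_add_cancel] at h
      linarith
    · exact empDist_Iic_le_add hα.le hεpos hmean' x
  calc levyDist (empDist f) (empDist g) ^ (α + 1)
      ≤ (S ^ (α + 1)⁻¹) ^ (α + 1) := Real.rpow_le_rpow (levyDist_nonneg _ _) hlevy hα1.le
    _ = S := hε₀

end Empirical

theorem levy_pow_le_min_perm_general {p : ℕ}
    (lam delta : Fin p → ℝ) (α : ℝ) (hα : 0 < α) :
    levyDist (empDist lam) (empDist delta) ^ (α + 1) ≤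
      ⨅ π : Equiv.Perm (Fin p), (1 / (p : ℝ)) * ∑ k, |lam k - delta (π k)| ^ α := by
  refine le_ciInf fun π => ?_
  rw [← empDist_comp_perm delta π]
  exact levyDist_empDist_rpow_le lam (delta ∘ π) hα

/-- Theorem A.38 of Bai–Silverstein: for any α > 0,
d_L(μ,ν)^{α+1} ≤ min_π (1/p)∑ |λ_k − δ_{π(k)}|^α over permutations π. -/
theorem levy_pow_le_min_perm {p : ℕ} (hp : 0 < p)
    (lam delta : Fin p → ℝ) (α : ℝ) (hα : 0 < α) :
    levyDist (empDist lam) (empDist delta) ^ (α + 1) ≤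
      ⨅ π : Equiv.Perm (Fin p), (1 / (p : ℝ)) * ∑ k, |lam k - delta (π k)| ^ α :=
  levy_pow_le_min_perm_general lam delta α hα
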